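/- arXiv:2511.16880 — 2 statements merged into one kernel-verified Lean document; each statement's English description precedes it below -/
import Mathlib

section
/- For F ∈ 𝓗₊ ∪ 𝓗₋, the map t ↦ T_F(t) on (0,∞) is nonincreasing and left-continuous, its right limit at t equals T_F^-(t) := inf{ z : F*(e^{-t}, e^{-z}) ≤ 1 }, and the set { t > 0 : T_F(t) ≠ T_F^-(t) } is countable. -/
open MeasureTheory Filter Set Real
open scoped Classical

/-- The class 𝓗₊. -/
def HPlus (F : ℝ → ℝ → ℝ) : Prop :=
  ContinuousOn (fun p : ℝ × ℝ => F p.1 p.2) {p | 0 < p.1 ∧ 0 < p.2} ∧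
  (∀ x y, 0 < x → 0 < y → 0 < F x y) ∧
  (∀ x x' y y', 0 < x → 0 < y → x ≤ x' → y ≤ y' → F x y ≤ F x' y') ∧
  (∀ a x y, 0 < a → 0 < x → 0 < y → F (a * x) (a * y) = a * F x y) ∧
  (∀ x y, 0 < x → 0 < y → max x y ≤ F x y) ∧
  (∀ y, 0 < y →
    Tendsto (fun x => F x y) (nhdsWithin 0 (Set.Ioi 0)) (nhds y) ∧
    Tendsto (fun x => F y x) (nhdsWithin 0 (Set.Ioi 0)) (nhds y))

/-- The class 𝓗₋. -/
def HMinus (F : ℝ → ℝ → ℝ) : Prop :=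
  ContinuousOn (fun p : ℝ × ℝ => F p.1 p.2) {p | 0 < p.1 ∧ 0 < p.2} ∧
  (∀ x y, 0 < x → 0 < y → 0 < F x y) ∧
  (∀ x x' y y', 0 < x → 0 < y → x ≤ x' → y ≤ y' → F x y ≤ F x' y') ∧
  (∀ a x y, 0 < a → 0 < x → 0 < y → F (a * x) (a * y) = a * F x y) ∧
  (∀ x y, 0 < x → 0 < y → F x y ≤ min x y) ∧
  (∀ y, 0 < y →
    Tendsto (fun x => F x y) atTop (nhds y) ∧
    Tendsto (fun x => F y x) atTop (nhds y))

/-- The associated element F* of 𝓗₊. -/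
noncomputable def Fstar (F : ℝ → ℝ → ℝ) : ℝ → ℝ → ℝ :=
  if HPlus F then F else fun x y => (F x⁻¹ y⁻¹)⁻¹

/-- T_F(t) := sup { z : F*(e^{-t}, e^{-z}) ≥ 1 }. -/
noncomputable def TF (F : ℝ → ℝ → ℝ) (t : ℝ) : ℝ :=
  sSup {z : ℝ | 1 ≤ Fstar F (Real.exp (-t)) (Real.exp (-z))}

/-- T_F^-(t) := inf { z : F*(e^{-t}, e^{-z}) ≤ 1 }. -/
noncomputable def TFminus (F : ℝ → ℝ → ℝ) (t : ℝ) : ℝ :=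
  sInf {z : ℝ | Fstar F (Real.exp (-t)) (Real.exp (-z)) ≤ 1}

/-- r_F := log F*(1,1). -/
noncomputable def rF (F : ℝ → ℝ → ℝ) : ℝ := Real.log (Fstar F 1 1)

/-- Γ_F^{(a,b)} := ∫₀^∞ t^a (T_F(t))^b dt, as an extended nonnegative real. -/
noncomputable def Gamma (F : ℝ → ℝ → ℝ) (a b : ℝ) : ENNReal :=
  ∫⁻ t in Set.Ioi (0 : ℝ), ENNReal.ofReal (t ^ a * (TF F t) ^ b)

/-- F^#(x,y) := F(y,x). -/
def Fsharp (F : ℝ → ℝ → ℝ) : ℝ → ℝ → ℝ := fun x y => F y x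

/-!
In logarithmic coordinates `g t z = F*(e^{-t}, e^{-z})` the function `g` is antitone in both
variables and shift-homogeneous, `g (t + c) (z + c) = e^{-c} g t z`. The upper level `T_F(t)` of
`{z | 1 ≤ g t z}` and the lower level `T_F^-(t)` of `{z | g t z ≤ 1}` satisfy `T_F^- ≤ T_F`,
and shift-homogeneity gives `T_F(s) ≤ T_F^-(t) + (s - t)` for `s > t`. Together with monotonicity
and continuity of `g` in `t`, this pins down both one-sided limits of `T_F`, and makes the intervals
`(T_F^-(t), T_F(t))` pairwise disjoint, so only countably many of them are nonempty.
-/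

lemma not_hPlus_of_hMinus {F : ℝ → ℝ → ℝ} (hF : HMinus F) : ¬ HPlus F := fun hP => by
  have h := (hP.2.2.2.2.1 1 2 one_pos two_pos).trans (hF.2.2.2.2.1 1 2 one_pos two_pos)
  norm_num at h

lemma tendsto_inv_comp_inv_nhdsGT_zero {f : ℝ → ℝ} {y : ℝ} (hy : y ≠ 0)
    (hf : Tendsto f atTop (nhds y⁻¹)) :
    Tendsto (fun x => (f x⁻¹)⁻¹) (nhdsWithin 0 (Ioi 0)) (nhds y) := by
  simpa using (hf.comp tendsto_inv_nhdsGT_zero).inv₀ (inv_ne_zero hy)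

lemma HMinus.hPlus_inv_inv {F : ℝ → ℝ → ℝ} (hF : HMinus F) :
    HPlus fun x y => (F x⁻¹ y⁻¹)⁻¹ := by
  obtain ⟨hcont, hpos, hmono, hhom, hmin, hlim⟩ := hF
  refine ⟨?_, fun x y hx hy => inv_pos.2 (hpos _ _ (inv_pos.2 hx) (inv_pos.2 hy)), ?_, ?_, ?_,
    fun y hy => ⟨?_, ?_⟩⟩
  · have hinv :
        ContinuousOn (fun p : ℝ × ℝ => (p.1⁻¹, p.2⁻¹)) {p | 0 < p.1 ∧ 0 < p.2} :=
      (continuous_fst.continuousOn.inv₀ fun p hp => hp.1.ne').prodMk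
        (continuous_snd.continuousOn.inv₀ fun p hp => hp.2.ne')
    exact (hcont.comp hinv fun p hp => ⟨inv_pos.2 hp.1, inv_pos.2 hp.2⟩).inv₀
      fun p hp => (hpos _ _ (inv_pos.2 hp.1) (inv_pos.2 hp.2)).ne'
  · intro x x' y y' hx hy hxx' hyy'
    have hx' := hx.trans_le hxx'
    have hy' := hy.trans_le hyy'
    exact inv_anti₀ (hpos _ _ (inv_pos.2 hx') (inv_pos.2 hy')) <| hmono _ _ _ _ (inv_pos.2 hx')
      (inv_pos.2 hy') (inv_anti₀ hx hxx') (inv_anti₀ hy hyy')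
  · intro a x y ha hx hy
    dsimp only
    rw [mul_inv, mul_inv, hhom _ _ _ (inv_pos.2 ha) (inv_pos.2 hx) (inv_pos.2 hy), mul_inv, inv_inv]
  · intro x y hx hy
    have hF := hpos _ _ (inv_pos.2 hx) (inv_pos.2 hy)
    have h := hmin _ _ (inv_pos.2 hx) (inv_pos.2 hy)
    exact max_le ((le_inv_comm₀ hx hF).2 (h.trans (min_le_left _ _)))
      ((le_inv_comm₀ hy hF).2 (h.trans (min_le_right _ _)))
  · exact tendsto_inv_comp_inv_nhdsGT_zero hy.ne' ((hlim _ (inv_pos.2 hy)).1)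
  · exact tendsto_inv_comp_inv_nhdsGT_zero hy.ne' ((hlim _ (inv_pos.2 hy)).2)

lemma hPlus_fstar {F : ℝ → ℝ → ℝ} (hF : HPlus F ∨ HMinus F) : HPlus (Fstar F) := by
  rcases hF with hP | hM
  · rwa [Fstar, if_pos hP]
  · rw [Fstar, if_neg (not_hPlus_of_hMinus hM)]
    exact hM.hPlus_inv_inv

section LevelSets

variable {g : ℝ → ℝ → ℝ}

noncomputable def upperLevel (g : ℝ → ℝ → ℝ) (t : ℝ) : ℝ := sSup {z | 1 ≤ g t z}

noncomputable def lowerLevel (g : ℝ → ℝ → ℝ) (t : ℝ) : ℝ := sInf {z | g t z ≤ 1}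

lemma nonempty_one_le (hlb : ∀ t z, exp (-z) ≤ g t z) (t : ℝ) : {z | 1 ≤ g t z}.Nonempty :=
  ⟨0, by simpa using hlb t 0⟩

lemma bddBelow_le_one (hlb : ∀ t z, exp (-z) ≤ g t z) (t : ℝ) : BddBelow {z | g t z ≤ 1} :=
  ⟨0, fun z hz => by simpa using (hlb t z).trans hz⟩

lemma bddAbove_one_le (hz_anti : ∀ t, Antitone (g t)) (hlt : ∀ t, 0 < t → ∃ z, g t z < 1)
    {t : ℝ} (ht : 0 < t) : BddAbove {z | 1 ≤ g t z} := by
  obtain ⟨z₀, hz₀⟩ := hlt t ht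
  exact ⟨z₀, fun z h => le_of_not_gt fun hzz₀ =>
    ((h.trans (hz_anti t hzz₀.le)).trans_lt hz₀).false⟩

lemma lt_one_of_upperLevel_lt (hz_anti : ∀ t, Antitone (g t))
    (hlt : ∀ t, 0 < t → ∃ z, g t z < 1) {t z : ℝ} (ht : 0 < t) (h : upperLevel g t < z) :
    g t z < 1 :=
  lt_of_not_ge fun h' => (le_csSup (bddAbove_one_le hz_anti hlt ht) h').not_gt h

lemma one_lt_of_lt_lowerLevel (hlb : ∀ t z, exp (-z) ≤ g t z) {t z : ℝ}
    (h : z < lowerLevel g t) : 1 < g t z :=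
  lt_of_not_ge fun h' => (csInf_le (bddBelow_le_one hlb t) h').not_gt h

lemma lowerLevel_le_upperLevel (hz_anti : ∀ t, Antitone (g t)) (hlb : ∀ t z, exp (-z) ≤ g t z)
    (hlt : ∀ t, 0 < t → ∃ z, g t z < 1) {t : ℝ} (ht : 0 < t) :
    lowerLevel g t ≤ upperLevel g t :=
  le_of_forall_gt_imp_ge_of_dense fun _ h =>
    csInf_le (bddBelow_le_one hlb t) (lt_one_of_upperLevel_lt hz_anti hlt ht h).le

lemma upperLevel_anti (hz_anti : ∀ t, Antitone (g t)) (ht_anti : ∀ z, Antitone (g · z))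
    (hlb : ∀ t z, exp (-z) ≤ g t z) (hlt : ∀ t, 0 < t → ∃ z, g t z < 1) {s t : ℝ}
    (hs : 0 < s) (hst : s ≤ t) : upperLevel g t ≤ upperLevel g s :=
  csSup_le_csSup (bddAbove_one_le hz_anti hlt hs) (nonempty_one_le hlb t)
    fun _ h => h.trans (ht_anti _ hst)

lemma upperLevel_le_lowerLevel_add (hz_anti : ∀ t, Antitone (g t))
    (hlb : ∀ t z, exp (-z) ≤ g t z)
    (hshift : ∀ t z c, g (t + c) (z + c) = exp (-c) * g t z)
    (hlt : ∀ t, 0 < t → ∃ z, g t z < 1) {s t : ℝ} (ht : 0 < t) (hts : t < s) :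
    upperLevel g s ≤ lowerLevel g t + (s - t) := by
  refine csSup_le (nonempty_one_le hlb s) fun z hz₁ => le_of_not_gt fun hz_gt => ?_
  obtain ⟨z₀, hz₀⟩ := hlt t ht
  obtain ⟨w, hw, hwz⟩ := exists_lt_of_csInf_lt ⟨z₀, hz₀.le⟩ (lt_sub_iff_add_lt.2 hz_gt)
  have hle : g t (z - (s - t)) ≤ 1 := (hz_anti t hwz.le).trans hw
  have hexp : exp (-(s - t)) < 1 := exp_lt_one_iff.2 (by linarith)
  have heq : g s z = exp (-(s - t)) * g t (z - (s - t)) := by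
    simpa using hshift t (z - (s - t)) (s - t)
  have hgsz : g s z < 1 := by
    rw [heq]
    calc exp (-(s - t)) * g t (z - (s - t)) ≤ exp (-(s - t)) * 1 := by gcongr
      _ < 1 := by rwa [mul_one]
  exact (hz₁.out.trans_lt hgsz).false

lemma upperLevel_le_of_lt_one (hz_anti : ∀ t, Antitone (g t)) (hlb : ∀ t z, exp (-z) ≤ g t z)
    {t z : ℝ} (h : g t z < 1) : upperLevel g t ≤ z :=
  csSup_le (nonempty_one_le hlb t) fun _ hw =>
    le_of_not_gt fun hzw => ((hw.out.trans (hz_anti t hzw.le)).trans_lt h).false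

lemma tendsto_upperLevel_nhdsLT (hz_anti : ∀ t, Antitone (g t))
    (ht_anti : ∀ z, Antitone (g · z))
    (ht_cont : ∀ z, Continuous (g · z)) (hlb : ∀ t z, exp (-z) ≤ g t z)
    (hlt : ∀ t, 0 < t → ∃ z, g t z < 1) {t : ℝ} (ht : 0 < t) :
    Tendsto (upperLevel g) (nhdsWithin t (Iio t)) (nhds (upperLevel g t)) := by
  refine tendsto_order.2 ⟨fun b hb => ?_, fun b hb => ?_⟩
  · filter_upwards [Ioo_mem_nhdsLT ht] with s hs
    exact hb.trans_le (upperLevel_anti hz_anti ht_anti hlb hlt hs.1 hs.2.le)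
  · obtain ⟨z, htz, hzb⟩ := exists_between hb
    have hg : ∀ᶠ s in nhds t, g s z < 1 :=
      ((ht_cont z).tendsto t).eventually_lt_const (lt_one_of_upperLevel_lt hz_anti hlt ht htz)
    filter_upwards [nhdsWithin_le_nhds hg] with s hs
    exact (upperLevel_le_of_lt_one hz_anti hlb hs).trans_lt hzb

lemma tendsto_upperLevel_nhdsGT (hz_anti : ∀ t, Antitone (g t))
    (ht_cont : ∀ z, Continuous (g · z))
    (hlb : ∀ t z, exp (-z) ≤ g t z) (hshift : ∀ t z c, g (t + c) (z + c) = exp (-c) * g t z)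
    (hlt : ∀ t, 0 < t → ∃ z, g t z < 1) {t : ℝ} (ht : 0 < t) :
    Tendsto (upperLevel g) (nhdsWithin t (Ioi t)) (nhds (lowerLevel g t)) := by
  refine tendsto_order.2 ⟨fun b hb => ?_, fun b hb => ?_⟩
  · obtain ⟨z, hbz, hzt⟩ := exists_between hb
    have hg : ∀ᶠ s in nhds t, 1 < g s z :=
      ((ht_cont z).tendsto t).eventually_const_lt (one_lt_of_lt_lowerLevel hlb hzt)
    filter_upwards [nhdsWithin_le_nhds hg, self_mem_nhdsWithin] with s hs hts
    exact hbz.trans_le (le_csSup (bddAbove_one_le hz_anti hlt (ht.trans hts)) hs.le)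
  · filter_upwards [Ioo_mem_nhdsGT (show t < t + (b - lowerLevel g t) by linarith)] with s hs
    have := upperLevel_le_lowerLevel_add hz_anti hlb hshift hlt ht hs.1
    linarith [hs.2]

lemma upperLevel_le_lowerLevel_of_lt (hz_anti : ∀ t, Antitone (g t))
    (ht_anti : ∀ z, Antitone (g · z)) (ht_cont : ∀ z, Continuous (g · z))
    (hlb : ∀ t z, exp (-z) ≤ g t z) (hshift : ∀ t z c, g (t + c) (z + c) = exp (-c) * g t z)
    (hlt : ∀ t, 0 < t → ∃ z, g t z < 1) {t t' : ℝ} (ht : 0 < t) (htt' : t < t') :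
    upperLevel g t' ≤ lowerLevel g t := by
  refine ge_of_tendsto (tendsto_upperLevel_nhdsGT hz_anti ht_cont hlb hshift hlt ht) ?_
  filter_upwards [Ioo_mem_nhdsGT htt'] with s hs
  exact upperLevel_anti hz_anti ht_anti hlb hlt (ht.trans hs.1) hs.2.le

lemma countable_upperLevel_ne_lowerLevel (hz_anti : ∀ t, Antitone (g t))
    (ht_anti : ∀ z, Antitone (g · z)) (ht_cont : ∀ z, Continuous (g · z))
    (hlb : ∀ t z, exp (-z) ≤ g t z) (hshift : ∀ t z c, g (t + c) (z + c) = exp (-c) * g t z)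
    (hlt : ∀ t, 0 < t → ∃ z, g t z < 1) :
    {t | 0 < t ∧ upperLevel g t ≠ lowerLevel g t}.Countable := by
  have hdisj : ∀ t t', 0 < t → t < t' →
      Disjoint (Ioo (lowerLevel g t) (upperLevel g t)) (Ioo (lowerLevel g t') (upperLevel g t')) :=
    fun t t' ht htt' => disjoint_left.2 fun x hx hx' =>
      ((hx'.2.trans_le (upperLevel_le_lowerLevel_of_lt hz_anti ht_anti ht_cont hlb hshift hlt
        ht htt')).trans hx.1).false
  refine PairwiseDisjoint.countable_of_isOpen
    (s := fun t => Ioo (lowerLevel g t) (upperLevel g t)) (fun t ht t' ht' hne => ?_)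
    (fun _ _ => isOpen_Ioo) fun t ht => nonempty_Ioo.2 ?_
  · rcases hne.lt_or_gt with h | h
    · exact hdisj t t' ht.1 h
    · exact (hdisj t' t ht'.1 h).symm
  · exact (lowerLevel_le_upperLevel hz_anti hlb hlt ht.1).lt_of_ne ht.2.symm

end LevelSets

noncomputable def logProfile (G : ℝ → ℝ → ℝ) (t z : ℝ) : ℝ := G (exp (-t)) (exp (-z))

lemma TF_eq_upperLevel (F : ℝ → ℝ → ℝ) : TF F = upperLevel (logProfile (Fstar F)) := rfl

lemma TFminus_eq_lowerLevel (F : ℝ → ℝ → ℝ) :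
    TFminus F = lowerLevel (logProfile (Fstar F)) := rfl

namespace HPlus

variable {G : ℝ → ℝ → ℝ}

lemma continuous_logProfile_fst (hG : HPlus G) (z : ℝ) : Continuous (logProfile G · z) :=
  hG.1.comp_continuous (f := fun t => (exp (-t), exp (-z))) (by fun_prop)
    fun _ => ⟨exp_pos _, exp_pos _⟩

lemma antitone_logProfile (hG : HPlus G) (t : ℝ) : Antitone (logProfile G t) := fun _ _ h =>
  hG.2.2.1 _ _ _ _ (exp_pos _) (exp_pos _) le_rfl (exp_le_exp.2 (neg_le_neg h))

lemma antitone_logProfile_fst (hG : HPlus G) (z : ℝ) : Antitone (logProfile G · z) :=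
  fun _ _ h => hG.2.2.1 _ _ _ _ (exp_pos _) (exp_pos _) (exp_le_exp.2 (neg_le_neg h)) le_rfl

lemma exp_neg_le_logProfile (hG : HPlus G) (t z : ℝ) : exp (-z) ≤ logProfile G t z :=
  (le_max_right _ _).trans (hG.2.2.2.2.1 _ _ (exp_pos _) (exp_pos _))

lemma logProfile_add_add (hG : HPlus G) (t z c : ℝ) :
    logProfile G (t + c) (z + c) = exp (-c) * logProfile G t z := by
  simp only [logProfile, neg_add, exp_add, mul_comm _ (exp (-c))]
  exact hG.2.2.2.1 _ _ _ (exp_pos _) (exp_pos _) (exp_pos _)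

lemma exists_logProfile_lt_one (hG : HPlus G) {t : ℝ} (ht : 0 < t) :
    ∃ z, logProfile G t z < 1 :=
  have hexp : Tendsto (fun z => exp (-z)) atTop (nhdsWithin 0 (Ioi 0)) :=
    tendsto_nhdsWithin_of_tendsto_nhds_of_eventually_within _ tendsto_exp_neg_atTop_nhds_zero
      (.of_forall fun _ => exp_pos _)
  (((hG.2.2.2.2.2 _ (exp_pos (-t))).2.comp hexp).eventually_lt_const
    (exp_lt_one_iff.2 (neg_lt_zero.2 ht))).exists

end HPlus

/-- T_F is nonincreasing and left-continuous on (0,∞), its right limit at t equals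
T_F^-(t), and the set of t > 0 where T_F(t) ≠ T_F^-(t) is countable. -/
theorem stmt3 (F : ℝ → ℝ → ℝ) (hF : HPlus F ∨ HMinus F) :
    (∀ s t : ℝ, 0 < s → s ≤ t → TF F t ≤ TF F s) ∧
    (∀ t : ℝ, 0 < t →
      Tendsto (TF F) (nhdsWithin t (Set.Iio t)) (nhds (TF F t))) ∧
    (∀ t : ℝ, 0 < t →
      Tendsto (TF F) (nhdsWithin t (Set.Ioi t)) (nhds (TFminus F t))) ∧
    Set.Countable {t : ℝ | 0 < t ∧ TF F t ≠ TFminus F t} := by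
  have hG := hPlus_fstar hF
  have hz_anti := hG.antitone_logProfile
  have ht_anti := hG.antitone_logProfile_fst
  have ht_cont := hG.continuous_logProfile_fst
  have hlb := hG.exp_neg_le_logProfile
  have hshift := hG.logProfile_add_add
  have hlt : ∀ t : ℝ, 0 < t → ∃ z, logProfile (Fstar F) t z < 1 :=
    fun _ => hG.exists_logProfile_lt_one
  rw [TF_eq_upperLevel, TFminus_eq_lowerLevel]
  exact ⟨fun s t hs hst => upperLevel_anti hz_anti ht_anti hlb hlt hs hst,
    fun t ht => tendsto_upperLevel_nhdsLT hz_anti ht_anti ht_cont hlb hlt ht,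
    fun t ht => tendsto_upperLevel_nhdsGT hz_anti ht_cont hlb hshift hlt ht,
    countable_upperLevel_ne_lowerLevel hz_anti ht_anti ht_cont hlb hshift hlt⟩
end

section
/- For F ∈ 𝓗₊ ∪ 𝓗₋, a ≥ 0 and b > 0, define Γ_F^{(a,b)} := ∫₀^∞ t^a (T_F(t))^b dt ∈ [0,∞]. Then Γ_F^{(a,b)} = 0 if and only if F ∈ {max, min}. -/
open MeasureTheory Filter Set Real
open scoped Classical

/-!
Γ_F^{(a,b)} vanishes iff T_F vanishes on (0,∞): T_F is nonnegative and nonincreasing, so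
T_F(t₀) > 0 makes the integrand positive on all of (0,t₀]. If F*(x,y) = m > max(x,y)
somewhere, homogeneity gives F*(x/m, y/m) = 1, i.e. z = log(m/y) > 0 lies in the set defining
T_F(t) at t = log(m/x) > 0; hence T_F ≡ 0 iff F* = max, which means F = max for F ∈ 𝓗₊ and
F = min for F ∈ 𝓗₋.
-/

open Topology

theorem setLIntegral_rpow_mul_rpow_eq_zero_iff {g : ℝ → ℝ} (a : ℝ) {b : ℝ} (hb : 0 < b)
    (hg₀ : ∀ t, 0 < t → 0 ≤ g t) (hg : AntitoneOn g (Ioi 0)) :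
    ∫⁻ t in Ioi 0, ENNReal.ofReal (t ^ a * g t ^ b) = 0 ↔ ∀ t, 0 < t → g t = 0 := by
  refine ⟨fun h t₀ ht₀ => ?_, fun h => ?_⟩
  · by_contra hne
    have hc : 0 < g t₀ ^ b := rpow_pos_of_pos ((hg₀ t₀ ht₀).lt_of_ne' hne) b
    have hsupp : Ioc 0 t₀ ⊆ Function.support fun s => ENNReal.ofReal (s ^ a * g t₀ ^ b) :=
      fun s hs => (ENNReal.ofReal_pos.2 (mul_pos (rpow_pos_of_pos hs.1 a) hc)).ne'
    have hpos : 0 < ∫⁻ s in Ioc 0 t₀, ENNReal.ofReal (s ^ a * g t₀ ^ b) := by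
      rw [setLIntegral_pos_iff (by fun_prop), inter_eq_right.2 hsupp, volume_Ioc]
      simpa using ht₀
    have hle : ∫⁻ s in Ioc 0 t₀, ENNReal.ofReal (s ^ a * g t₀ ^ b) ≤
        ∫⁻ t in Ioi 0, ENNReal.ofReal (t ^ a * g t ^ b) := by
      refine (setLIntegral_mono' measurableSet_Ioc fun s hs => ?_).trans
        (lintegral_mono_set Ioc_subset_Ioi_self)
      exact ENNReal.ofReal_le_ofReal (mul_le_mul_of_nonneg_left
        (rpow_le_rpow (hg₀ t₀ ht₀) (hg hs.1 ht₀ hs.2) hb.le) (rpow_pos_of_pos hs.1 a).le)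
    exact (hpos.trans_le hle).ne' h
  · rw [setLIntegral_congr_fun measurableSet_Ioi fun t ht => by
      rw [h t ht, zero_rpow hb.ne', mul_zero, ENNReal.ofReal_zero]]
    exact lintegral_zero

theorem inv_inv_eq_max_iff (G : ℝ → ℝ → ℝ) :
    (∀ x y : ℝ, 0 < x → 0 < y → (G x⁻¹ y⁻¹)⁻¹ = max x y) ↔
      ∀ x y : ℝ, 0 < x → 0 < y → G x y = min x y := by
  refine ⟨fun h x y hx hy => ?_, fun h x y hx hy => ?_⟩
  · have := h x⁻¹ y⁻¹ (inv_pos.2 hx) (inv_pos.2 hy)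
    rwa [inv_inv, inv_inv, ← antitoneOn_inv_pos.map_min hx hy, inv_inj] at this
  · rw [h _ _ (inv_pos.2 hx) (inv_pos.2 hy), ← antitoneOn_inv_pos.map_max hx hy, inv_inv]

section Fstar

variable {F : ℝ → ℝ → ℝ}

theorem HPlus.not_eq_min (hP : HPlus F) : ¬ ∀ x y : ℝ, 0 < x → 0 < y → F x y = min x y :=
  fun h => by simpa [h 1 2 one_pos two_pos] using hP.2.2.2.2.1 1 2 one_pos two_pos

theorem HMinus.not_eq_max (hM : HMinus F) : ¬ ∀ x y : ℝ, 0 < x → 0 < y → F x y = max x y :=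
  fun h => by simpa [h 1 2 one_pos two_pos] using hM.2.2.2.2.1 1 2 one_pos two_pos

theorem HPlus.not_hMinus (hP : HPlus F) : ¬ HMinus F := fun hM => by
  simpa using (hP.2.2.2.2.1 1 2 one_pos two_pos).trans (hM.2.2.2.2.1 1 2 one_pos two_pos)

theorem HPlus.fstar_eq (hP : HPlus F) : Fstar F = F := if_pos hP

theorem HMinus.fstar_eq (hM : HMinus F) : Fstar F = fun x y => (F x⁻¹ y⁻¹)⁻¹ :=
  if_neg fun hP => hP.not_hMinus hM

theorem max_le_fstar (hF : HPlus F ∨ HMinus F) {x y : ℝ} (hx : 0 < x) (hy : 0 < y) :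
    max x y ≤ Fstar F x y := by
  rcases hF with hP | hM
  · rw [hP.fstar_eq]
    exact hP.2.2.2.2.1 x y hx hy
  · rw [hM.fstar_eq]
    calc max x y = (min x⁻¹ y⁻¹)⁻¹ := by rw [← antitoneOn_inv_pos.map_max hx hy, inv_inv]
      _ ≤ (F x⁻¹ y⁻¹)⁻¹ := inv_anti₀ (hM.2.1 _ _ (inv_pos.2 hx) (inv_pos.2 hy))
          (hM.2.2.2.2.1 _ _ (inv_pos.2 hx) (inv_pos.2 hy))

theorem fstar_mul_mul (hF : HPlus F ∨ HMinus F) {c x y : ℝ} (hc : 0 < c) (hx : 0 < x)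
    (hy : 0 < y) : Fstar F (c * x) (c * y) = c * Fstar F x y := by
  rcases hF with hP | hM
  · rw [hP.fstar_eq]
    exact hP.2.2.2.1 c x y hc hx hy
  · rw [hM.fstar_eq]
    simp only [mul_inv]
    rw [hM.2.2.2.1 _ _ _ (inv_pos.2 hc) (inv_pos.2 hx) (inv_pos.2 hy), mul_inv, inv_inv]

theorem fstar_mono_left (hF : HPlus F ∨ HMinus F) {x x' y : ℝ} (hx : 0 < x) (hy : 0 < y)
    (hxx' : x ≤ x') : Fstar F x y ≤ Fstar F x' y := by
  rcases hF with hP | hM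
  · rw [hP.fstar_eq]
    exact hP.2.2.1 x x' y y hx hy hxx' le_rfl
  · rw [hM.fstar_eq]
    have hx' : 0 < x'⁻¹ := inv_pos.2 (hx.trans_le hxx')
    exact inv_anti₀ (hM.2.1 _ _ hx' (inv_pos.2 hy))
      (hM.2.2.1 _ _ _ _ hx' (inv_pos.2 hy) (inv_anti₀ hx hxx') le_rfl)

theorem tendsto_fstar_nhdsGT_zero (hF : HPlus F ∨ HMinus F) {x : ℝ} (hx : 0 < x) :
    Tendsto (Fstar F x) (𝓝[>] 0) (𝓝 x) := by
  rcases hF with hP | hM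
  · rw [hP.fstar_eq]
    exact (hP.2.2.2.2.2 x hx).2
  · rw [hM.fstar_eq]
    simpa using (((hM.2.2.2.2.2 x⁻¹ (inv_pos.2 hx)).2.comp tendsto_inv_nhdsGT_zero).inv₀
      (inv_ne_zero hx.ne'))

theorem fstar_eq_max_iff (hF : HPlus F ∨ HMinus F) :
    (∀ x y : ℝ, 0 < x → 0 < y → Fstar F x y = max x y) ↔
      (∀ x y : ℝ, 0 < x → 0 < y → F x y = max x y) ∨
        ∀ x y : ℝ, 0 < x → 0 < y → F x y = min x y := by
  rcases hF with hP | hM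
  · rw [hP.fstar_eq]
    exact ⟨Or.inl, fun h => h.resolve_right hP.not_eq_min⟩
  · rw [hM.fstar_eq, inv_inv_eq_max_iff]
    exact ⟨Or.inr, fun h => h.resolve_left hM.not_eq_max⟩

end Fstar

section TF

variable {F : ℝ → ℝ → ℝ}

def TFSet (F : ℝ → ℝ → ℝ) (t : ℝ) : Set ℝ :=
  {z : ℝ | 1 ≤ Fstar F (exp (-t)) (exp (-z))}

theorem TF_eq_sSup (t : ℝ) : TF F t = sSup (TFSet F t) := rfl

theorem zero_mem_TFSet (hF : HPlus F ∨ HMinus F) (t : ℝ) : 0 ∈ TFSet F t := by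
  have h := max_le_fstar hF (exp_pos (-t)) (exp_pos (-0))
  rw [TFSet, mem_ofPred_eq, neg_zero, exp_zero]
  rw [neg_zero, exp_zero] at h
  exact (le_max_right _ _).trans h

theorem bddAbove_TFSet (hF : HPlus F ∨ HMinus F) {t : ℝ} (ht : 0 < t) :
    BddAbove (TFSet F t) := by
  have hlim : Tendsto (fun z => Fstar F (exp (-t)) (exp (-z))) atTop (𝓝 (exp (-t))) :=
    (tendsto_fstar_nhdsGT_zero hF (exp_pos _)).comp <| tendsto_nhdsWithin_iff.2
      ⟨tendsto_exp_neg_atTop_nhds_zero, Eventually.of_forall fun z => exp_pos (-z)⟩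
  obtain ⟨Z, hZ⟩ :=
    eventually_atTop.1 (hlim.eventually_lt_const (exp_lt_one_iff.2 (by linarith)))
  exact ⟨Z, fun z hz => le_of_not_gt fun hzZ => (hZ z hzZ.le).not_ge hz⟩

theorem TF_nonneg (hF : HPlus F ∨ HMinus F) {t : ℝ} (ht : 0 < t) : 0 ≤ TF F t :=
  le_csSup (bddAbove_TFSet hF ht) (zero_mem_TFSet hF t)

theorem TF_antitoneOn (hF : HPlus F ∨ HMinus F) : AntitoneOn (TF F) (Ioi 0) :=
  fun s hs _ _ hst => csSup_le_csSup (bddAbove_TFSet hF hs) ⟨0, zero_mem_TFSet hF _⟩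
    fun _ hz => hz.trans (fstar_mono_left hF (exp_pos _) (exp_pos _) (by gcongr))

theorem TFSet_eq_Iic_of_fstar_eq_max (hmax : ∀ x y, 0 < x → 0 < y → Fstar F x y = max x y)
    {t : ℝ} (ht : 0 < t) : TFSet F t = Iic 0 := by
  ext z
  have het : ¬ 1 ≤ exp (-t) := not_le.2 (exp_lt_one_iff.2 (by linarith))
  simp only [TFSet, mem_ofPred_eq, hmax _ _ (exp_pos _) (exp_pos _), le_max_iff, het,
    false_or, one_le_exp_iff, mem_Iic, neg_nonneg]

theorem fstar_eq_max_of_TF_eq_zero (hF : HPlus F ∨ HMinus F) (h : ∀ t, 0 < t → TF F t = 0)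
    {x y : ℝ} (hx : 0 < x) (hy : 0 < y) : Fstar F x y = max x y := by
  by_contra hne
  set m := Fstar F x y with hm
  have hlt : max x y < m := (max_le_fstar hF hx hy).lt_of_ne' hne
  have hm₀ : 0 < m := hx.trans_le ((le_max_left x y).trans hlt.le)
  have ht : 0 < log (m / x) := log_pos ((one_lt_div hx).2 ((le_max_left x y).trans_lt hlt))
  have hz : 0 < log (m / y) := log_pos ((one_lt_div hy).2 ((le_max_right x y).trans_lt hlt))
  have hexp {u : ℝ} (hu : 0 < u) : exp (-log (m / u)) = m⁻¹ * u := by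
    rw [exp_neg, exp_log (div_pos hm₀ hu), inv_div, div_eq_inv_mul]
  have hmem : log (m / y) ∈ TFSet F (log (m / x)) := by
    rw [TFSet, mem_ofPred_eq, hexp hx, hexp hy, fstar_mul_mul hF (inv_pos.2 hm₀) hx hy, ← hm,
      inv_mul_cancel₀ hm₀.ne']
  have hle := le_csSup (bddAbove_TFSet hF ht) hmem
  rw [← TF_eq_sSup, h _ ht] at hle
  exact hle.not_gt hz

theorem TF_eq_zero_iff (hF : HPlus F ∨ HMinus F) :
    (∀ t, 0 < t → TF F t = 0) ↔ ∀ x y, 0 < x → 0 < y → Fstar F x y = max x y :=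
  ⟨fun h _ _ hx hy => fstar_eq_max_of_TF_eq_zero hF h hx hy, fun h t ht => by
    rw [TF_eq_sSup, TFSet_eq_Iic_of_fstar_eq_max h ht, csSup_Iic]⟩

end TF

theorem stmt7_general (F : ℝ → ℝ → ℝ) (hF : HPlus F ∨ HMinus F) (a b : ℝ)
    (hb : 0 < b) :
    Gamma F a b = 0 ↔
      ((∀ x y : ℝ, 0 < x → 0 < y → F x y = max x y) ∨
       (∀ x y : ℝ, 0 < x → 0 < y → F x y = min x y)) :=
  (setLIntegral_rpow_mul_rpow_eq_zero_iff a hb (fun _ ht => TF_nonneg hF ht)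
    (TF_antitoneOn hF)).trans ((TF_eq_zero_iff hF).trans (fstar_eq_max_iff hF))

/-- Γ_F^{(a,b)} = 0 iff F ∈ {max, min} (as functions on (0,∞)²). -/
theorem stmt7 (F : ℝ → ℝ → ℝ) (hF : HPlus F ∨ HMinus F) (a b : ℝ)
    (ha : 0 ≤ a) (hb : 0 < b) :
    Gamma F a b = 0 ↔
      ((∀ x y : ℝ, 0 < x → 0 < y → F x y = max x y) ∨
       (∀ x y : ℝ, 0 < x → 0 < y → F x y = min x y)) :=
  stmt7_general F hF a b hb
end
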